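/- Let B be an N×N real matrix with singular values σ₁ ≥ ... ≥ σ_N and let g ∈ ℝ^N. Suppose u_N is a unit left singular vector of B associated with σ_N. Then the smallest eigenvalue of BBᵀ + ggᵀ is at least max{σ_N², (u_Nᵀg)² · gap/(gap + ξ²)}, where gap = σ_{N-1}² - σ_N² and ξ = |u_Nᵀg| + ‖(I - u_N u_Nᵀ)g‖. -/

import Mathlib

open Matrix Finset RealInnerProductSpace

private lemma svr_auxQ (G r t2 u s : ℝ) (hG : 0 ≤ G) (ht2 : 0 ≤ t2) (hs : s^2 ≤ r^2*t2) :
    0 ≤ G^2*t2 + u^2*r^2 + 2*G*u*s := by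
  rcases eq_or_ne r 0 with h|h
  · subst h
    have hs0 : s = 0 := by
      have h2 : s^2 ≤ 0 := by linarith [hs]
      have := sq_nonneg s
      nlinarith [pow_eq_zero_iff (n := 2) (by norm_num : 2 ≠ 0) |>.mp (le_antisymm h2 this)]
    subst hs0
    nlinarith [mul_nonneg (mul_nonneg hG hG) ht2]
  · have hr2 : 0 < r^2 := by positivity
    nlinarith [sq_nonneg (u*r^2 + G*s), mul_nonneg (mul_nonneg hG hG) (sub_nonneg.2 hs)]

private lemma svr_scalar_strong (G r gN c s : ℝ) (hG : 0 ≤ G) (hc : c^2 ≤ 1)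
    (hs : s^2 ≤ r^2*(1-c^2)) :
    gN^2 * G ≤ (G*(1-c^2) + (gN*c+s)^2) * (G + gN^2 + r^2) := by
  have hQ := svr_auxQ G r (1-c^2) (gN*c+s) s hG (by linarith) hs
  nlinarith [mul_nonneg hG (sub_nonneg.2 hs), sq_nonneg (gN*c+s), mul_nonneg hG (sub_nonneg.2 hc)]

private lemma svr_scalar (G r gN c s : ℝ) (hG : 0 ≤ G) (hr : 0 ≤ r) (hc : c^2 ≤ 1)
    (hs : s^2 ≤ r^2*(1-c^2)) :
    gN^2 * (G / (G + (|gN|+r)^2)) ≤ G*(1-c^2) + (gN*c+s)^2 := by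
  rcases eq_or_lt_of_le hG with h0|h0
  · rw [← h0]
    simp only [zero_div, mul_zero, zero_mul, zero_add]
    positivity
  · have hD : 0 < G + (|gN|+r)^2 := by positivity
    rw [mul_div_assoc', div_le_iff₀ hD]
    have h1 := svr_scalar_strong G r gN c s hG hc hs
    have h2 : G + gN^2 + r^2 ≤ G + (|gN|+r)^2 := by
      have : gN^2 = |gN|^2 := (sq_abs gN).symm
      nlinarith [mul_nonneg (abs_nonneg gN) hr]
    have h3 : 0 ≤ G*(1-c^2) + (gN*c+s)^2 := by
      have := mul_nonneg hG (sub_nonneg.2 hc)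
      nlinarith [sq_nonneg (gN*c+s)]
    calc gN^2 * G ≤ (G*(1-c^2) + (gN*c+s)^2) * (G + gN^2 + r^2) := h1
      _ ≤ (G*(1-c^2) + (gN*c+s)^2) * (G + (|gN|+r)^2) := by
          exact mul_le_mul_of_nonneg_left h2 h3

private lemma svr_inner_eq_dot {n : ℕ} (x y : EuclideanSpace ℝ (Fin n)) :
    ⟪x, y⟫ = (x : Fin n → ℝ) ⬝ᵥ (y : Fin n → ℝ) := by
  simp [PiLp.inner_apply, dotProduct, RCLike.inner_apply]
  exact Finset.sum_congr rfl fun i _ => mul_comm _ _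

private lemma svr_sym_dot {n : ℕ} (M : Matrix (Fin n) (Fin n) ℝ) (hM : Mᵀ = M)
    (x y : Fin n → ℝ) : (M *ᵥ x) ⬝ᵥ y = x ⬝ᵥ (M *ᵥ y) := by
  rw [Matrix.dotProduct_mulVec]
  nth_rw 2 [← hM]
  rw [Matrix.vecMul_transpose, dotProduct_comm]

private lemma svr_parseval {n : ℕ} (b : OrthonormalBasis (Fin n) ℝ (EuclideanSpace ℝ (Fin n)))
    (x y : EuclideanSpace ℝ (Fin n)) :
    ∑ j, (⇑(b j) ⬝ᵥ (x : Fin n → ℝ)) * (⇑(b j) ⬝ᵥ (y : Fin n → ℝ))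
      = (x : Fin n → ℝ) ⬝ᵥ (y : Fin n → ℝ) := by
  have h := b.sum_inner_mul_inner x y
  simp_rw [svr_inner_eq_dot] at h
  rw [← h]
  refine Finset.sum_congr rfl fun j _ => ?_
  rw [dotProduct_comm]

private lemma svr_eigen_expand {n : ℕ} (M : Matrix (Fin n) (Fin n) ℝ) (hM : M.IsHermitian)
    (x : Fin n → ℝ) :
    x ⬝ᵥ (M *ᵥ x) = ∑ j, hM.eigenvalues j * (⇑(hM.eigenvectorBasis j) ⬝ᵥ x)^2 := by
  have hMt : Mᵀ = M := by simpa using hM.eq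
  have h := svr_parseval hM.eigenvectorBasis (WithLp.toLp 2 x) (WithLp.toLp 2 (M *ᵥ x))
  simp only [WithLp.ofLp_toLp] at h
  rw [← h]
  refine Finset.sum_congr rfl fun j _ => ?_
  have h2 : ⇑(hM.eigenvectorBasis j) ⬝ᵥ (M *ᵥ x)
      = hM.eigenvalues j * (⇑(hM.eigenvectorBasis j) ⬝ᵥ x) := by
    rw [← svr_sym_dot M hMt, hM.mulVec_eigenvectorBasis, smul_dotProduct]
    simp
  rw [h2]; ring

private lemma svr_eigvec_coeff {n : ℕ} (M : Matrix (Fin n) (Fin n) ℝ) (hM : M.IsHermitian)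
    (u : Fin n → ℝ) (μ : ℝ) (hu : M *ᵥ u = μ • u) (j : Fin n) :
    (hM.eigenvalues j - μ) * (⇑(hM.eigenvectorBasis j) ⬝ᵥ u) = 0 := by
  have hMt : Mᵀ = M := by simpa using hM.eq
  have h1 : ⇑(hM.eigenvectorBasis j) ⬝ᵥ (M *ᵥ u)
      = hM.eigenvalues j * (⇑(hM.eigenvectorBasis j) ⬝ᵥ u) := by
    rw [← svr_sym_dot M hMt, hM.mulVec_eigenvectorBasis, smul_dotProduct]
    simp
  rw [hu, dotProduct_smul] at h1
  simp only [smul_eq_mul] at h1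
  linarith [h1]

/-- The spectral inequality: for a unit vector `x`,
`x ⬝ M x ≥ σ_N² + gap · (1 - (uN⬝x)²)`. -/
private lemma svr_spec {n : ℕ} (hn : 1 < n) (M : Matrix (Fin n) (Fin n) ℝ)
    (hM : M.IsHermitian)
    (σ : Fin n → ℝ) (hmono : Antitone σ) (hσnonneg : ∀ i, 0 ≤ σ i)
    (hperm : ∃ τ : Equiv.Perm (Fin n), (fun i => σ i ^ 2) = hM.eigenvalues ∘ τ)
    (uN : Fin n → ℝ) (hunit : ∑ i, uN i ^ 2 = 1)
    (huN : M *ᵥ uN = (σ ⟨n - 1, by omega⟩ ^ 2) • uN)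
    (x : Fin n → ℝ) (hx : ∑ i, x i ^ 2 = 1) :
    σ ⟨n - 1, by omega⟩ ^ 2
      + (σ ⟨n - 2, by omega⟩ ^ 2 - σ ⟨n - 1, by omega⟩ ^ 2) * (1 - (uN ⬝ᵥ x) ^ 2)
      ≤ x ⬝ᵥ (M *ᵥ x) := by
  obtain ⟨τ, hτ⟩ := hperm
  set N1 : Fin n := ⟨n - 1, by omega⟩ with hN1
  set N2 : Fin n := ⟨n - 2, by omega⟩ with hN2
  set a : Fin n → ℝ := fun j => ⇑(hM.eigenvectorBasis j) ⬝ᵥ x with ha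
  set w : Fin n → ℝ := fun j => ⇑(hM.eigenvectorBasis j) ⬝ᵥ uN with hw
  have hlam : ∀ j, hM.eigenvalues j = σ (τ.symm j) ^ 2 := by
    intro j
    have := congrFun hτ (τ.symm j)
    simpa using this.symm
  have hdotxx : x ⬝ᵥ x = 1 := by
    rw [← hx]; simp [dotProduct, sq]
  have hdotuu : uN ⬝ᵥ uN = 1 := by
    rw [← hunit]; simp [dotProduct, sq]
  have ha1 : ∑ j, a j ^ 2 = 1 := by
    have := svr_parseval hM.eigenvectorBasis
      (WithLp.toLp 2 x) (WithLp.toLp 2 x)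
    simpa [sq, hdotxx] using this
  have hw1 : ∑ j, w j ^ 2 = 1 := by
    have := svr_parseval hM.eigenvectorBasis
      (WithLp.toLp 2 uN) (WithLp.toLp 2 uN)
    simpa [sq, hdotuu] using this
  have hwa : ∑ j, w j * a j = uN ⬝ᵥ x := by
    have := svr_parseval hM.eigenvectorBasis
      (WithLp.toLp 2 uN) (WithLp.toLp 2 x)
    simpa using this
  have hexp : x ⬝ᵥ (M *ᵥ x) = ∑ j, hM.eigenvalues j * a j ^ 2 :=
    svr_eigen_expand M hM x
  have hmin : ∀ j, σ N1 ^ 2 ≤ hM.eigenvalues j := by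
    intro j
    rw [hlam j]
    have h1 : (τ.symm j : Fin n) ≤ N1 := by
      rw [Fin.le_def]
      have := (τ.symm j).isLt
      simp only [hN1]
      omega
    have h2 : σ N1 ≤ σ (τ.symm j) := hmono h1
    exact pow_le_pow_left₀ (hσnonneg N1) h2 2
  have hgapnn : 0 ≤ σ N2 ^ 2 - σ N1 ^ 2 := by
    have h1 : N2 ≤ N1 := by rw [Fin.le_def]; simp only [hN1, hN2]; omega
    have h2 : σ N1 ≤ σ N2 := hmono h1
    have := pow_le_pow_left₀ (hσnonneg N1) h2 2
    linarith
  rcases eq_or_lt_of_le hgapnn with hgap0|hgappos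
  · rw [← hgap0, zero_mul, add_zero, hexp]
    calc σ N1 ^ 2 = ∑ j, σ N1 ^ 2 * a j ^ 2 := by rw [← Finset.mul_sum, ha1, mul_one]
      _ ≤ ∑ j, hM.eigenvalues j * a j ^ 2 :=
          Finset.sum_le_sum fun j _ => mul_le_mul_of_nonneg_right (hmin j) (sq_nonneg _)
  · -- gap > 0 : the bottom eigenvalue is simple
    set j0 : Fin n := τ N1 with hj0def
    have hj0 : hM.eigenvalues j0 = σ N1 ^ 2 := by
      rw [hlam]; simp [hj0def]
    have hother : ∀ j, j ≠ j0 → σ N2 ^ 2 ≤ hM.eigenvalues j := by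
      intro j hj
      rw [hlam j]
      have hne : τ.symm j ≠ N1 := by
        intro h
        apply hj
        rw [hj0def, ← h]
        simp
      have h1 : (τ.symm j : Fin n) ≤ N2 := by
        rw [Fin.le_def]
        have h2 := (τ.symm j).isLt
        have h3 : (τ.symm j : Fin n).val ≠ n - 1 := by
          intro hv
          apply hne
          apply Fin.ext
          simpa [hN1] using hv
        simp only [hN2]
        omega
      have h2 : σ N2 ≤ σ (τ.symm j) := hmono h1
      exact pow_le_pow_left₀ (hσnonneg N2) h2 2
  -- coefficients of uN vanish off j0
    have hwzero : ∀ j, j ≠ j0 → w j = 0 := by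
      intro j hj
      have hc := svr_eigvec_coeff M hM uN (σ N1 ^ 2) huN j
      have hpos : 0 < hM.eigenvalues j - σ N1 ^ 2 := by
        have := hother j hj
        linarith
      have := mul_eq_zero.mp hc
      rcases this with h|h
      · exact absurd h (by linarith)
      · exact h
    have hwj0 : w j0 ^ 2 = 1 := by
      rw [← hw1, ← Finset.add_sum_erase _ _ (Finset.mem_univ j0)]
      have : ∑ j ∈ Finset.univ.erase j0, w j ^ 2 = 0 := by
        apply Finset.sum_eq_zero
        intro j hj
        rw [hwzero j (Finset.ne_of_mem_erase hj)]
        ring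
      rw [this, add_zero]
    have hc : uN ⬝ᵥ x = w j0 * a j0 := by
      rw [← hwa, ← Finset.add_sum_erase _ _ (Finset.mem_univ j0)]
      have : ∑ j ∈ Finset.univ.erase j0, w j * a j = 0 := by
        apply Finset.sum_eq_zero
        intro j hj
        rw [hwzero j (Finset.ne_of_mem_erase hj)]
        ring
      rw [this, add_zero]
    have hc2 : (uN ⬝ᵥ x) ^ 2 = a j0 ^ 2 := by
      rw [hc, mul_pow, hwj0, one_mul]
    have hrest : ∑ j ∈ Finset.univ.erase j0, a j ^ 2 = 1 - a j0 ^ 2 := by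
      have := Finset.add_sum_erase Finset.univ (fun j => a j ^ 2) (Finset.mem_univ j0)
      rw [ha1] at this
      beta_reduce at this
      linarith
    have hlow : ∑ j ∈ Finset.univ.erase j0, σ N2 ^ 2 * a j ^ 2
        ≤ ∑ j ∈ Finset.univ.erase j0, hM.eigenvalues j * a j ^ 2 :=
      Finset.sum_le_sum fun j hj =>
        mul_le_mul_of_nonneg_right (hother j (Finset.ne_of_mem_erase hj)) (sq_nonneg _)
    rw [← Finset.mul_sum, hrest] at hlow
    rw [hexp, ← Finset.add_sum_erase _ _ (Finset.mem_univ j0), hj0, hc2]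
    nlinarith [hlow]

/-- Smallest eigenvalue of a Hermitian real matrix. -/
noncomputable def smallestEig {n : ℕ} {M : Matrix (Fin n) (Fin n) ℝ}
    (hM : M.IsHermitian) : ℝ := ⨅ i, hM.eigenvalues i

/-- rank-one bound applied with A = BBᵀ, y = g:
λ_min(BBᵀ + ggᵀ) ≥ max{σ_N², (u_Nᵀg)²·gap/(gap + ξ²)}. -/
theorem singular_value_rank_one_bound
    {n : ℕ} (hn : 2 ≤ n)
    (B : Matrix (Fin n) (Fin n) ℝ)
    -- σ lists the singular values of B in decreasing order
    (σ : Fin n → ℝ) (hmono : Antitone σ) (hσnonneg : ∀ i, 0 ≤ σ i)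
    (hBBT : (B * Bᵀ).IsHermitian)
    (hperm : ∃ τ : Equiv.Perm (Fin n), (fun i => σ i ^ 2) = hBBT.eigenvalues ∘ τ)
    -- u_N is a unit left singular vector of B associated with σ_N
    (uN : Fin n → ℝ) (hunit : ∑ i, uN i ^ 2 = 1)
    (huN : (B * Bᵀ).mulVec uN = (σ ⟨n - 1, by omega⟩ ^ 2) • uN)
    (g : Fin n → ℝ) (hg : g ≠ 0)
    (gN gap ξ : ℝ)
    (hgN : gN = ∑ i, uN i * g i)
    (hgap : gap = σ ⟨n - 2, by omega⟩ ^ 2 - σ ⟨n - 1, by omega⟩ ^ 2)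
    (hξ : ξ = |gN| + Real.sqrt (∑ i, (g i - gN * uN i) ^ 2))
    (hsum : (B * Bᵀ + Matrix.vecMulVec g g).IsHermitian) :
    max (σ ⟨n - 1, by omega⟩ ^ 2) (gN ^ 2 * (gap / (gap + ξ ^ 2)))
      ≤ smallestEig hsum := by
  have hnty : Nonempty (Fin n) := ⟨⟨0, by omega⟩⟩
  have hgapnn : 0 ≤ gap := by
    rw [hgap]
    have h1 : (⟨n - 2, by omega⟩ : Fin n) ≤ ⟨n - 1, by omega⟩ := by
      rw [Fin.mk_le_mk]; omega
    have h2 : σ ⟨n - 1, by omega⟩ ≤ σ ⟨n - 2, by omega⟩ := hmono h1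
    have := pow_le_pow_left₀ (hσnonneg ⟨n - 1, by omega⟩) h2 2
    linarith
  -- the key quadratic-form bound for an arbitrary unit vector
  have key : ∀ x : Fin n → ℝ, ∑ i, x i ^ 2 = 1 →
      max (σ ⟨n - 1, by omega⟩ ^ 2) (gN ^ 2 * (gap / (gap + ξ ^ 2)))
        ≤ x ⬝ᵥ ((B * Bᵀ + Matrix.vecMulVec g g) *ᵥ x) := by
    intro x hx
    have hspec := svr_spec hn (B * Bᵀ) hBBT σ hmono hσnonneg hperm uN hunit huN x hx
    set c : ℝ := uN ⬝ᵥ x with hcdef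
    have hQgg : x ⬝ᵥ (Matrix.vecMulVec g g *ᵥ x) = (g ⬝ᵥ x) ^ 2 := by
      simp only [Matrix.mulVec, Matrix.vecMulVec_apply, dotProduct]
      have h1 : ∀ i, x i * (∑ j, g i * g j * x j) = (g i * x i) * ∑ j, g j * x j := by
        intro i
        rw [Finset.mul_sum, Finset.mul_sum]
        exact Finset.sum_congr rfl fun j _ => by ring
      rw [Finset.sum_congr rfl fun i _ => h1 i, ← Finset.sum_mul, sq]
    have hsplit : x ⬝ᵥ ((B * Bᵀ + Matrix.vecMulVec g g) *ᵥ x)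
        = x ⬝ᵥ ((B * Bᵀ) *ᵥ x) + (g ⬝ᵥ x) ^ 2 := by
      rw [Matrix.add_mulVec, dotProduct_add, hQgg]
    -- basic facts
    have hguN : ∑ i, g i * uN i = gN := by
      rw [hgN]; exact Finset.sum_congr rfl fun i _ => by ring
    have hc2le : c ^ 2 ≤ 1 := by
      have := Finset.sum_mul_sq_le_sq_mul_sq Finset.univ uN x
      rw [hunit, hx, one_mul] at this
      simpa [hcdef, dotProduct] using this
    set r : ℝ := Real.sqrt (∑ i, (g i - gN * uN i) ^ 2) with hrdef
    have hrnn : 0 ≤ r := Real.sqrt_nonneg _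
    have hr2 : r ^ 2 = ∑ i, (g i - gN * uN i) ^ 2 := by
      rw [hrdef, Real.sq_sqrt]
      exact Finset.sum_nonneg fun i _ => sq_nonneg _
    set s : ℝ := (g ⬝ᵥ x) - gN * c with hsdef
    -- Cauchy-Schwarz for the orthogonal parts
    have hsid : s = ∑ i, (g i - gN * uN i) * (x i - c * uN i) := by
      have h1 : ∀ i, (g i - gN * uN i) * (x i - c * uN i)
          = g i * x i - c * (g i * uN i) - gN * (uN i * x i) + gN * c * uN i ^ 2 := by
        intro i; ring
      rw [Finset.sum_congr rfl fun i _ => h1 i]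
      rw [Finset.sum_add_distrib, Finset.sum_sub_distrib, Finset.sum_sub_distrib,
        ← Finset.mul_sum, ← Finset.mul_sum, ← Finset.mul_sum, hguN, hunit]
      simp only [hsdef, hcdef, dotProduct, mul_one]
      ring
    have hxperp : ∑ i, (x i - c * uN i) ^ 2 = 1 - c ^ 2 := by
      have h1 : ∀ i, (x i - c * uN i) ^ 2
          = x i ^ 2 - 2 * c * (uN i * x i) + c ^ 2 * uN i ^ 2 := by
        intro i; ring
      rw [Finset.sum_congr rfl fun i _ => h1 i]
      rw [Finset.sum_add_distrib, Finset.sum_sub_distrib,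
        ← Finset.mul_sum, ← Finset.mul_sum, hx, hunit]
      simp only [hcdef, dotProduct, mul_one]
      ring
    have hCS : s ^ 2 ≤ r ^ 2 * (1 - c ^ 2) := by
      rw [hsid, hr2, ← hxperp]
      exact Finset.sum_mul_sq_le_sq_mul_sq Finset.univ _ _
    -- combine
    have hfinal := svr_scalar gap r gN c s hgapnn hrnn hc2le hCS
    have hu : gN * c + s = g ⬝ᵥ x := by rw [hsdef]; ring
    rw [hsplit]
    apply max_le
    · have h1 : 0 ≤ gap * (1 - c ^ 2) := mul_nonneg hgapnn (by linarith)
      have h2 : 0 ≤ (g ⬝ᵥ x) ^ 2 := sq_nonneg _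
      rw [← hgap] at hspec
      linarith
    · have hξr : ξ ^ 2 = (|gN| + r) ^ 2 := by rw [hξ, hrdef]
      rw [hξr]
      rw [hu] at hfinal
      have h3 : 0 ≤ σ (⟨n - 1, by omega⟩ : Fin n) ^ 2 := sq_nonneg _
      rw [← hgap] at hspec
      linarith
  -- apply to each eigenvector of the sum
  rw [smallestEig]
  refine le_ciInf fun i => ?_
  have hv1 : ∑ k, (⇑(hsum.eigenvectorBasis i)) k ^ 2 = 1 := by
    have hnorm : ‖hsum.eigenvectorBasis i‖ = 1 := hsum.eigenvectorBasis.orthonormal.1 i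
    have h2 : ⟪hsum.eigenvectorBasis i, hsum.eigenvectorBasis i⟫ = (1 : ℝ) := by
      rw [real_inner_self_eq_norm_sq, hnorm]; norm_num
    rw [svr_inner_eq_dot] at h2
    rw [← h2]
    simp [dotProduct, sq]
  have heig : (⇑(hsum.eigenvectorBasis i)) ⬝ᵥ
      ((B * Bᵀ + Matrix.vecMulVec g g) *ᵥ ⇑(hsum.eigenvectorBasis i))
      = hsum.eigenvalues i := by
    rw [hsum.mulVec_eigenvectorBasis i, dotProduct_smul]
    have hvv : (⇑(hsum.eigenvectorBasis i)) ⬝ᵥ (⇑(hsum.eigenvectorBasis i)) = 1 := by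
      rw [← hv1]; simp [dotProduct, sq]
    rw [hvv]
    simp
  calc max (σ ⟨n - 1, by omega⟩ ^ 2) (gN ^ 2 * (gap / (gap + ξ ^ 2)))
      ≤ (⇑(hsum.eigenvectorBasis i)) ⬝ᵥ
        ((B * Bᵀ + Matrix.vecMulVec g g) *ᵥ ⇑(hsum.eigenvectorBasis i)) :=
        key _ hv1
    _ = hsum.eigenvalues i := heig
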